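/- Quantitative inverse function theorem: Let X and Y be Banach spaces, U ⊆ X an open set, and f : X → Y continuously Fréchet differentiable on U. Let x₀ ∈ U and y₀ = f(x₀), and let η, σ, L > 0. Assume: (i) ‖y₀‖_Y < η; (ii) the Fréchet derivative δf(x₀) : X → Y is an invertible bounded linear map with ‖δf(x₀)⁻¹‖ < σ; (iii) the open ball B_{2ησ}(x₀) is contained in U; (iv) δf is Lipschitz continuous on B_{2ησ}(x₀) with Lipschitz constant L; and (v) 2Lησ² < 1. Then there exists a unique continuously differentiable function g : B_η(y₀) → B_{2ησ}(x₀) such that g(y₀) = x₀ and f(g(y)) = y for all y ∈ B_η(y₀). -/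

import Mathlib

/-!
For `y` near `y₀ = f x₀`, the chord map `x ↦ x - A (f x - y)` (with `A = δf(x₀)⁻¹`) is a
contraction of the closed ball of radius `2‖A‖‖y - y₀‖` about `x₀`, and its fixed point solves
`f x = y`. The Lipschitz bound on `δf` yields the quadratic Taylor estimate
`‖f x - f x₀ - δf(x₀)(x - x₀)‖ ≤ L/2 ‖x - x₀‖²`, whose factor `1/2` is exactly what `2Lησ² < 1`
needs for that ball to be mapped into itself. The same Lipschitz bound keeps `f` close to its
linearisation on `B_{2ησ}(x₀)`, so `f` is injective there (giving uniqueness) and `δf` stays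
invertible there (Neumann series), so that the inverse agrees locally with the `C¹` local inverse
of the classical inverse function theorem.
-/

open Metric Set Filter
open scoped NNReal Topology

section

variable {E F : Type*} [NormedAddCommGroup E] [NormedSpace ℝ E]
  [NormedAddCommGroup F] [NormedSpace ℝ F] {f : E → F} {f' : E → E →L[ℝ] F} {s : Set E}

theorem Convex.norm_image_sub_sub_fderiv_le_of_lipschitz (hs : Convex ℝ s)
    (hf : ∀ z ∈ s, HasFDerivWithinAt f (f' z) s z) {x y : E} {L : ℝ}
    (hLip : ∀ z ∈ s, ‖f' z - f' x‖ ≤ L * ‖z - x‖) (xs : x ∈ s) (ys : y ∈ s) :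
    ‖f y - f x - f' x (y - x)‖ ≤ L / 2 * ‖y - x‖ ^ 2 := by
  set γ : ℝ → E := ⇑(AffineMap.lineMap x y : ℝ →ᵃ[ℝ] E)
  have hγ : MapsTo γ (Icc 0 1) s := hs.mapsTo_lineMap xs ys
  have hγx : ∀ t, γ t - x = t • (y - x) := AffineMap.lineMap_vsub_left x y
  set φ : ℝ → F := fun t => f (γ t) - f x - t • f' x (y - x)
  have hφ' : ∀ t ∈ Icc (0 : ℝ) 1,
      HasDerivWithinAt φ (f' (γ t) (y - x) - f' x (y - x)) (Icc 0 1) t := fun t ht => by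
    have hfγ := (hf (γ t) (hγ ht)).comp_hasDerivWithinAt t AffineMap.hasDerivWithinAt_lineMap hγ
    exact (hfγ.sub_const _).sub
      ((hasDerivWithinAt_id t _).smul_const _ |>.congr_deriv (one_smul _ _))
  have hbound : ∀ t ∈ Ico (0 : ℝ) 1,
      ‖f' (γ t) (y - x) - f' x (y - x)‖ ≤ L * ‖y - x‖ ^ 2 * t := fun t ht => calc
    ‖f' (γ t) (y - x) - f' x (y - x)‖ ≤ ‖f' (γ t) - f' x‖ * ‖y - x‖ :=
      (f' (γ t) - f' x).le_opNorm (y - x)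
    _ ≤ L * ‖γ t - x‖ * ‖y - x‖ := by
      gcongr; exact hLip _ (hγ (Ico_subset_Icc_self ht))
    _ = L * ‖y - x‖ ^ 2 * t := by
      rw [hγx, norm_smul, Real.norm_of_nonneg ht.1]; ring
  have hB : ∀ t, HasDerivAt (fun t => L * ‖y - x‖ ^ 2 * (t ^ 2 / 2)) (L * ‖y - x‖ ^ 2 * t) t :=
    fun t => by simpa using ((hasDerivAt_pow 2 t).div_const 2).const_mul (L * ‖y - x‖ ^ 2)
  have hφ1 := image_norm_le_of_norm_deriv_right_le_deriv_boundary
    (fun t ht => (hφ' t ht).continuousWithinAt)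
    (fun t ht => (hφ' t (Ico_subset_Icc_self ht)).mono_of_mem_nhdsWithin
      (Icc_mem_nhdsGE_of_mem ht)) (by simp [φ, γ]) hB hbound (right_mem_Icc.2 zero_le_one)
  calc ‖f y - f x - f' x (y - x)‖ = ‖φ 1‖ := by simp [φ, γ]
    _ ≤ L * ‖y - x‖ ^ 2 * (1 ^ 2 / 2) := hφ1
    _ = L / 2 * ‖y - x‖ ^ 2 := by ring

theorem Convex.approximatesLinearOn_of_norm_fderiv_sub_le (hs : Convex ℝ s)
    (hf : ∀ z ∈ s, HasFDerivWithinAt f (f' z) s z) {φ : E →L[ℝ] F} {c : ℝ≥0}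
    (hc : ∀ z ∈ s, ‖f' z - φ‖ ≤ c) : ApproximatesLinearOn f φ s c :=
  fun _ hx _ hy => hs.norm_image_sub_le_of_norm_hasFDerivWithin_le' hf hc hy hx

end

section

variable {𝕜 X Y : Type*} [NontriviallyNormedField 𝕜] [NormedAddCommGroup X] [NormedSpace 𝕜 X]
  [NormedAddCommGroup Y] [NormedSpace 𝕜 Y] {f : X → Y} {T : X →L[𝕜] Y} {A : Y →L[𝕜] X}
  {s : Set X} {c : ℝ≥0}

theorem ApproximatesLinearOn.injOn_of_leftInverse (hf : ApproximatesLinearOn f T s c)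
    (hA : Function.LeftInverse A T) (hc : ‖A‖ * c < 1) : InjOn f s := by
  intro a ha b hb hab
  have hle : ‖a - b‖ ≤ ‖A‖ * c * ‖a - b‖ := calc
    ‖a - b‖ = ‖A (f a - f b - T (a - b))‖ := by
      rw [hab, sub_self, zero_sub, map_neg, hA, norm_neg]
    _ ≤ ‖A‖ * (c * ‖a - b‖) := A.le_of_opNorm_le_of_le le_rfl (hf a ha b hb)
    _ = ‖A‖ * c * ‖a - b‖ := by ring
  have hab0 : ‖a - b‖ = 0 := by nlinarith [norm_nonneg (a - b)]
  exact sub_eq_zero.mp (norm_eq_zero.mp hab0)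

/-- The chord method: `x ↦ x - A (f x - y)` is a contraction of `s`. -/
theorem ApproximatesLinearOn.exists_mem_apply_eq (hf : ApproximatesLinearOn f T s c)
    (hA₁ : Function.LeftInverse A T) (hA₂ : Function.RightInverse A T) (hc : ‖A‖ * c < 1)
    (hs : IsComplete s) (hne : s.Nonempty) {y : Y}
    (hmaps : MapsTo (fun x => x - A (f x - y)) s s) : ∃ x ∈ s, f x = y := by
  have hlip : LipschitzWith (‖A‖₊ * c) (hmaps.restrict _ s s) := by
    refine LipschitzWith.of_dist_le_mul fun a b => ?_
    have hchord : ∀ x : X, x - A (f x - y) = A y - A (f x - T x) := fun x => by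
      simp only [map_sub, hA₁ x]; abel
    simpa only [Subtype.dist_eq, MapsTo.val_restrict_apply, hchord, dist_sub_left,
      Function.comp_apply] using (A.lipschitz.comp hf.lipschitz_sub).dist_le_mul a b
  obtain ⟨x₀, hx₀⟩ := hne
  obtain ⟨x, hx, hfix, -⟩ := ContractingWith.exists_fixedPoint' hs hmaps
    ⟨by exact_mod_cast hc, hlip⟩ hx₀ (edist_ne_top _ _)
  refine ⟨x, hx, ?_⟩
  have hAx : A (f x - y) = 0 := sub_eq_self.mp hfix
  rw [← sub_eq_zero, ← hA₂ (f x - y), hAx, map_zero]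

end

theorem exists_mem_closedBall_apply_eq_of_norm_fderiv_sub_le
    {X Y : Type*} [NormedAddCommGroup X] [NormedSpace ℝ X] [CompleteSpace X]
    [NormedAddCommGroup Y] [NormedSpace ℝ Y] {f : X → Y} {f' : X → X →L[ℝ] Y} {x₀ : X}
    {A : Y →L[ℝ] X} (hA₁ : Function.LeftInverse A (f' x₀))
    (hA₂ : Function.RightInverse A (f' x₀)) {L : ℝ} (hL : 0 ≤ L) {y : Y}
    (hy : 2 * L * ‖A‖ ^ 2 * ‖y - f x₀‖ < 1)
    (hf : ∀ z ∈ closedBall x₀ (2 * ‖A‖ * ‖y - f x₀‖),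
      HasFDerivWithinAt f (f' z) (closedBall x₀ (2 * ‖A‖ * ‖y - f x₀‖)) z)
    (hLip : ∀ z ∈ closedBall x₀ (2 * ‖A‖ * ‖y - f x₀‖), ‖f' z - f' x₀‖ ≤ L * ‖z - x₀‖) :
    ∃ x ∈ closedBall x₀ (2 * ‖A‖ * ‖y - f x₀‖), f x = y := by
  set d := ‖y - f x₀‖
  set ρ := 2 * ‖A‖ * d
  have hconv := convex_closedBall x₀ ρ
  have hx₀ : x₀ ∈ closedBall x₀ ρ := mem_closedBall_self (by positivity)
  have hnear : ∀ z ∈ closedBall x₀ ρ, ‖f' z - f' x₀‖ ≤ (⟨L * ρ, by positivity⟩ : ℝ≥0) :=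
    fun z hz => (hLip z hz).trans (mul_le_mul_of_nonneg_left (mem_closedBall_iff_norm.mp hz) hL)
  have hmaps : MapsTo (fun x => x - A (f x - y)) (closedBall x₀ ρ) (closedBall x₀ ρ) := by
    intro x hx
    have hquad := hconv.norm_image_sub_sub_fderiv_le_of_lipschitz hf hLip hx₀ hx
    have hxρ : ‖x - x₀‖ ≤ ρ := mem_closedBall_iff_norm.mp hx
    have hsplit : x - A (f x - y) - x₀ = A (y - f x₀) - A (f x - f x₀ - f' x₀ (x - x₀)) := by
      simp only [map_sub, hA₁ x, hA₁ x₀]; abel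
    rw [mem_closedBall_iff_norm, hsplit]
    calc _ ≤ ‖A‖ * d + ‖A‖ * (L / 2 * ρ ^ 2) := norm_sub_le_of_le (A.le_opNorm _)
          (A.le_of_opNorm_le_of_le le_rfl (hquad.trans (by gcongr)))
      _ = ‖A‖ * d * (1 + 2 * L * ‖A‖ ^ 2 * d) := by ring
      _ ≤ ‖A‖ * d * 2 := by gcongr; linarith
      _ = ρ := by ring
  refine (hconv.approximatesLinearOn_of_norm_fderiv_sub_le hf hnear).exists_mem_apply_eq hA₁ hA₂
    ?_ isClosed_closedBall.isComplete ⟨x₀, hx₀⟩ hmaps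
  calc ‖A‖ * (L * ρ) = 2 * L * ‖A‖ ^ 2 * d := by ring
    _ < 1 := hy

theorem ContinuousLinearEquiv.exists_coe_eq_of_norm_symm_mul_norm_sub_lt
    {𝕜 X Y : Type*} [NontriviallyNormedField 𝕜] [NormedAddCommGroup X] [NormedSpace 𝕜 X]
    [CompleteSpace X] [NormedAddCommGroup Y] [NormedSpace 𝕜 Y]
    (E : X ≃L[𝕜] Y) {T : X →L[𝕜] Y} (hT : ‖(E.symm : Y →L[𝕜] X)‖ * ‖T - (E : X →L[𝕜] Y)‖ < 1) :
    ∃ E' : X ≃L[𝕜] Y, (E' : X →L[𝕜] Y) = T := by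
  have hu : ‖(E.symm : Y →L[𝕜] X).comp ((E : X →L[𝕜] Y) - T)‖ < 1 :=
    ((E.symm : Y →L[𝕜] X).opNorm_comp_le _).trans_lt (by rwa [norm_sub_rev])
  refine ⟨(ContinuousLinearEquiv.unitsEquiv 𝕜 X (Units.oneSub _ hu)).trans E, ?_⟩
  ext x
  simp

theorem ContDiffAt.of_eventually_rightInverse_of_injOn
    {𝕂 X Y : Type*} [RCLike 𝕂] [NormedAddCommGroup X] [NormedSpace 𝕂 X] [CompleteSpace X]
    [NormedAddCommGroup Y] [NormedSpace 𝕂 Y] {f : X → Y} {g : Y → X} {E : X ≃L[𝕂] Y}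
    {W : Set X} {y : Y} {n : WithTop ℕ∞} (hf : ContDiffAt 𝕂 n f (g y))
    (hf' : HasFDerivAt f (E : X →L[𝕂] Y) (g y)) (hn : n ≠ 0) (hW : IsOpen W) (hinj : InjOn f W)
    (hgW : ∀ᶠ z in 𝓝 y, g z ∈ W) (hfg : ∀ᶠ z in 𝓝 y, f (g z) = z) : ContDiffAt 𝕂 n g y := by
  have hy : f (g y) = y := hfg.self_of_nhds
  have hinv := hf.to_localInverse hf' hn
  rw [hy] at hinv
  have hgy := hf.localInverse_apply_image hf' hn
  rw [hy] at hgy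
  have hinvW : ∀ᶠ z in 𝓝 y, hf.localInverse hf' hn z ∈ W :=
    hinv.continuousAt.eventually (hW.eventually_mem (hgy.symm ▸ hgW.self_of_nhds))
  have hright := (hf.hasStrictFDerivAt' hf' hn).eventually_right_inverse
  rw [hy] at hright
  refine hinv.congr_of_eventuallyEq ?_
  filter_upwards [hgW, hfg, hinvW, hright] with z hgz hfgz hinvz hrightz
  exact hinj hgz hinvz (hfgz.trans hrightz.symm)

theorem quantitative_inverse_function_theorem_general
    {X Y : Type*} [NormedAddCommGroup X] [NormedSpace ℝ X] [CompleteSpace X]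
    [NormedAddCommGroup Y] [NormedSpace ℝ Y]
    (U : Set X)
    (f : X → Y) (f' : X → X →L[ℝ] Y)
    (hderiv : ∀ x ∈ U, HasFDerivAt f (f' x) x)
    (x₀ : X)
    (η σ L : ℝ) (hη : 0 < η) (hσ : 0 < σ) (hL : 0 < L)
    -- (ii) `δf(x₀)` is invertible with `‖δf(x₀)⁻¹‖ < σ`
    (A : Y →L[ℝ] X)
    (hA₁ : ∀ x : X, A (f' x₀ x) = x) (hA₂ : ∀ y : Y, f' x₀ (A y) = y)
    (hAnorm : ‖A‖ < σ)
    -- (iii) `B_{2ησ}(x₀) ⊆ U`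
    (hball : ball x₀ (2 * η * σ) ⊆ U)
    -- (iv) `δf` is Lipschitz on `B_{2ησ}(x₀)` with constant `L`
    (hLip : ∀ u ∈ ball x₀ (2 * η * σ), ∀ v ∈ ball x₀ (2 * η * σ),
      ‖f' u - f' v‖ ≤ L * ‖u - v‖)
    -- (v) `2Lησ² < 1`
    (hsmall : 2 * L * η * σ ^ 2 < 1) :
    ∃ g : Y → X,
      (ContDiffOn ℝ 1 g (ball (f x₀) η) ∧
        Set.MapsTo g (ball (f x₀) η) (ball x₀ (2 * η * σ)) ∧
        g (f x₀) = x₀ ∧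
        ∀ y ∈ ball (f x₀) η, f (g y) = y) ∧
      ∀ g₂ : Y → X,
        (ContDiffOn ℝ 1 g₂ (ball (f x₀) η) ∧
          Set.MapsTo g₂ (ball (f x₀) η) (ball x₀ (2 * η * σ)) ∧
          g₂ (f x₀) = x₀ ∧
          ∀ y ∈ ball (f x₀) η, f (g₂ y) = y) →
        ∀ y ∈ ball (f x₀) η, g₂ y = g y := by
  set r := 2 * η * σ
  have hr : 0 < r := by positivity
  have hderiv' : ∀ x ∈ ball x₀ r, HasFDerivAt f (f' x) x := fun x hx => hderiv x (hball hx)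
  have hnear : ∀ x ∈ ball x₀ r, ‖f' x - f' x₀‖ ≤ L * r := fun x hx =>
    (hLip x hx x₀ (mem_ball_self hr)).trans (by gcongr; exact (mem_ball_iff_norm.mp hx).le)
  have hAr : ‖A‖ * (L * r) < 1 := calc
    ‖A‖ * (L * r) ≤ σ * (L * r) := by gcongr
    _ = 2 * L * η * σ ^ 2 := by ring
    _ < 1 := hsmall
  have hinj : InjOn f (ball x₀ r) :=
    ((convex_ball x₀ r).approximatesLinearOn_of_norm_fderiv_sub_le (c := ⟨L * r, by positivity⟩)
      (fun x hx => (hderiv' x hx).hasFDerivWithinAt) hnear).injOn_of_leftInverse hA₁ hAr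
  have hsurj : ∀ y ∈ ball (f x₀) η, ∃ x ∈ ball x₀ r, f x = y := by
    intro y hy
    have hd : ‖y - f x₀‖ < η := mem_ball_iff_norm.mp hy
    have hρ : 2 * ‖A‖ * ‖y - f x₀‖ < r := calc
      2 * ‖A‖ * ‖y - f x₀‖ ≤ 2 * σ * ‖y - f x₀‖ := by gcongr
      _ < 2 * σ * η := by gcongr
      _ = r := by ring
    have hsub := closedBall_subset_ball (x := x₀) hρ
    obtain ⟨x, hx, rfl⟩ := exists_mem_closedBall_apply_eq_of_norm_fderiv_sub_le hA₁ hA₂ hL.le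
      (by nlinarith [show 2 * L * ‖A‖ ^ 2 * ‖y - f x₀‖ ≤ 2 * L * σ ^ 2 * η by gcongr])
      (fun z hz => (hderiv' z (hsub hz)).hasFDerivWithinAt)
      (fun z hz => hLip z (hsub hz) x₀ (mem_ball_self hr))
    exact ⟨x, hsub hx, rfl⟩
  choose! g hg_mem hg_inv using hsurj
  have hg₀ : g (f x₀) = x₀ :=
    hinj (hg_mem _ (mem_ball_self hη)) (mem_ball_self hr) (hg_inv _ (mem_ball_self hη))
  have hC1 : ∀ x ∈ ball x₀ r, ContDiffAt ℝ 1 f x := fun x hx =>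
    contDiffAt_one_iff.mpr ⟨f', ball x₀ r, isOpen_ball.mem_nhds hx,
      (LipschitzOnWith.of_dist_le' (by simpa only [dist_eq_norm] using hLip)).continuousOn, hderiv'⟩
  let E₀ : X ≃L[ℝ] Y := .equivOfInverse (f' x₀) A hA₁ hA₂
  have hg_smooth : ContDiffOn ℝ 1 g (ball (f x₀) η) := by
    intro y hy
    have hgy := hg_mem y hy
    obtain ⟨E, hE⟩ := E₀.exists_coe_eq_of_norm_symm_mul_norm_sub_lt (T := f' (g y))
      (show ‖A‖ * ‖f' (g y) - f' x₀‖ < 1 from hAr.trans_le' (by gcongr; exact hnear _ hgy))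
    refine ((hC1 _ hgy).of_eventually_rightInverse_of_injOn (hE ▸ hderiv' _ hgy) one_ne_zero
      isOpen_ball hinj ?_ ?_).contDiffWithinAt
    · filter_upwards [isOpen_ball.mem_nhds hy] using hg_mem
    · filter_upwards [isOpen_ball.mem_nhds hy] using hg_inv
  refine ⟨g, ⟨hg_smooth, hg_mem, hg₀, hg_inv⟩, ?_⟩
  rintro g₂ ⟨-, hg₂_mem, -, hg₂_inv⟩ y hy
  exact hinj (hg₂_mem hy) (hg_mem y hy) ((hg₂_inv y hy).trans (hg_inv y hy).symm)

/-- Quantitative inverse function theorem: under quantitative bounds on the residual,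
the inverse of the derivative, and the Lipschitz constant of the derivative, there is a
unique continuously differentiable local inverse `g : B_η(y₀) → B_{2ησ}(x₀)` with
`g y₀ = x₀` and `f (g y) = y` on `B_η(y₀)` (where `y₀ = f x₀`). -/
theorem quantitative_inverse_function_theorem
    {X Y : Type*} [NormedAddCommGroup X] [NormedSpace ℝ X] [CompleteSpace X]
    [NormedAddCommGroup Y] [NormedSpace ℝ Y] [CompleteSpace Y]
    (U : Set X) (hU : IsOpen U)
    (f : X → Y) (f' : X → X →L[ℝ] Y)
    (hderiv : ∀ x ∈ U, HasFDerivAt f (f' x) x)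
    (hcont : ContinuousOn f' U)
    (x₀ : X) (hx₀ : x₀ ∈ U)
    (η σ L : ℝ) (hη : 0 < η) (hσ : 0 < σ) (hL : 0 < L)
    -- (i) the residual is small: `‖y₀‖ < η`
    (hres : ‖f x₀‖ < η)
    -- (ii) `δf(x₀)` is invertible with `‖δf(x₀)⁻¹‖ < σ`
    (A : Y →L[ℝ] X)
    (hA₁ : ∀ x : X, A (f' x₀ x) = x) (hA₂ : ∀ y : Y, f' x₀ (A y) = y)
    (hAnorm : ‖A‖ < σ)
    -- (iii) `B_{2ησ}(x₀) ⊆ U`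
    (hball : ball x₀ (2 * η * σ) ⊆ U)
    -- (iv) `δf` is Lipschitz on `B_{2ησ}(x₀)` with constant `L`
    (hLip : ∀ u ∈ ball x₀ (2 * η * σ), ∀ v ∈ ball x₀ (2 * η * σ),
      ‖f' u - f' v‖ ≤ L * ‖u - v‖)
    -- (v) `2Lησ² < 1`
    (hsmall : 2 * L * η * σ ^ 2 < 1) :
    ∃ g : Y → X,
      (ContDiffOn ℝ 1 g (ball (f x₀) η) ∧
        Set.MapsTo g (ball (f x₀) η) (ball x₀ (2 * η * σ)) ∧
        g (f x₀) = x₀ ∧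
        ∀ y ∈ ball (f x₀) η, f (g y) = y) ∧
      ∀ g₂ : Y → X,
        (ContDiffOn ℝ 1 g₂ (ball (f x₀) η) ∧
          Set.MapsTo g₂ (ball (f x₀) η) (ball x₀ (2 * η * σ)) ∧
          g₂ (f x₀) = x₀ ∧
          ∀ y ∈ ball (f x₀) η, f (g₂ y) = y) →
        ∀ y ∈ ball (f x₀) η, g₂ y = g y :=
  quantitative_inverse_function_theorem_general U f f' hderiv x₀ η σ L hη hσ hL A hA₁ hA₂ hAnorm
    hball hLip hsmall
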